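/- Let r ≥ 3 and s ≥ 1 be integers, let G be the r×s cylindrical grid, and let φ be a proper 3-coloring of the hoop D_1 with colors {1,2,3} whose winding number on D_1 has absolute value at most 1. Let p be an integer with 1 ≤ p ≤ s − 1 and 2p ≤ r − 2, and suppose that φ extends to a proper 3-coloring ψ of the subgraph G_p of G induced by the vertices of D_1 ∪ D_2 ∪ ⋯ ∪ D_p such that D_p has a segmentation with respect to ψ into at most r − 2p + 2 segments. Then φ extends to a proper 3-coloring ψ′ of the subgraph G_{p+1} induced by the vertices of D_1 ∪ ⋯ ∪ D_{p+1} such that D_{p+1} has a segmentation with respect to ψ′ into at most r − 2p segments. -/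

import Mathlib

/-- The `r × s` cylindrical grid, with vertex set `ZMod r × Fin s` (the vertex
`(i, j)` of the paper, `1 ≤ j ≤ s`, is represented by `(i, j - 1)`). -/
def cylGrid (r s : ℕ) : SimpleGraph (ZMod r × Fin s) where
  Adj u v := u ≠ v ∧
    ((u.2 = v.2 ∧ (v.1 = u.1 + 1 ∨ u.1 = v.1 + 1)) ∨
      (u.1 = v.1 ∧ (u.2.val + 1 = v.2.val ∨ v.2.val + 1 = u.2.val)))
  symm := by
    constructor
    rintro u v ⟨hne, h⟩
    refine ⟨hne.symm, ?_⟩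
    rcases h with ⟨h1, h2⟩ | ⟨h1, h2⟩
    · exact Or.inl ⟨h1.symm, h2.symm⟩
    · exact Or.inr ⟨h1.symm, h2.symm⟩
  loopless := ⟨by rintro u ⟨hne, -⟩; exact hne rfl⟩

/-- The winding number of a 3-coloring `φ` of a cycle whose vertices are
`v_1, …, v_k` in cyclic order (vertex `v_{i+1}` is represented by `i : ZMod k`).
Colors lie in `ZMod 3`, where `1` and `2` are the colors 1 and 2 and `0`
represents the color 3. -/
def winding (k : ℕ) (φ : ZMod k → ZMod 3) : ℤ :=
  ∑ i ∈ Finset.range k,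
    ((if φ (i : ZMod k) = 1 ∧ φ ((i : ZMod k) + 1) = 2 then 1 else 0)
      - (if φ (i : ZMod k) = 2 ∧ φ ((i : ZMod k) + 1) = 1 then 1 else 0))

/-- `HasSegmentation r c m` says that the 3-coloring `c` of a cycle of length `r`
(vertices `ZMod r` in cyclic order) admits a segmentation into at most `m`
segments: a partition of the vertex set into `k ≤ m` sets `X_1, …, X_k`
occurring in this cyclic order, where `X_{i+1}` consists of the `len i`
consecutive vertices `t i, …, t i + (len i − 1)` (the next segment starting at
`t (i+1) = t i + len i`, and the lengths summing to `r`), each segment being the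
vertex set of a path with an even number of edges (`len i` odd) on which `c`
uses only the colors `c (t i)` (the flag of the segment) and `c (t i) + 1`
(cyclically in `ZMod 3`), both of its ends receiving the flag. -/
def HasSegmentation (r : ℕ) (c : ZMod r → ZMod 3) (m : ℕ) : Prop :=
  ∃ (k : ℕ) (t : ZMod k → ZMod r) (len : ZMod k → ℕ),
    0 < k ∧ k ≤ m ∧
    (∀ i : ZMod k, 0 < len i ∧ Odd (len i)) ∧
    (∑ i ∈ Finset.range k, len (i : ZMod k)) = r ∧
    (∀ i : ZMod k, t (i + 1) = t i + (len i : ZMod r)) ∧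
    (∀ (i : ZMod k) (m' : ℕ), m' < len i →
        c (t i + (m' : ZMod r)) = c (t i) ∨ c (t i + (m' : ZMod r)) = c (t i) + 1) ∧
    (∀ i : ZMod k, c (t i + ((len i - 1 : ℕ) : ZMod r)) = c (t i))



lemma sum_range_zmod {M : Type*} [AddCommMonoid M] (k : ℕ) [NeZero k] (h : ZMod k → M) :
    ∑ i ∈ Finset.range k, h (i : ZMod k) = ∑ x : ZMod k, h x := by
  refine Finset.sum_bij' (fun i _ => ((i : ℕ) : ZMod k)) (fun x _ => x.val) ?_ ?_ ?_ ?_ ?_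
  · intro a ha; exact Finset.mem_univ _
  · intro x _; exact Finset.mem_range.2 x.val_lt
  · intro a ha; exact ZMod.val_cast_of_lt (Finset.mem_range.1 ha)
  · intro x _; exact ZMod.natCast_rightInverse x
  · intro a _; rfl

lemma sum_range_add'' {M : Type*} [AddCommMonoid M] (f : ℕ → M) (a b : ℕ) :
    ∑ i ∈ Finset.range (a + b), f i
      = ∑ i ∈ Finset.range a, f i + ∑ i ∈ Finset.range b, f (a + i) := by
  induction b with
  | zero => simp
  | succ b ih =>
      rw [show a + (b+1) = (a+b)+1 by omega, Finset.sum_range_succ, ih,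
        Finset.sum_range_succ, add_assoc]

lemma alt_sum (u : ℕ) :
    ∑ m ∈ Finset.range (2 * u), (if m % 2 = 0 then (1 : ℤ) else -1) = 0 := by
  induction u with
  | zero => simp
  | succ u ih =>
      rw [show 2 * (u+1) = (2*u) + 1 + 1 by omega, Finset.sum_range_succ,
        Finset.sum_range_succ, ih]
      have h1 : (2*u) % 2 = 0 := by omega
      have h2 : (2*u+1) % 2 = 1 := by omega
      simp [h1, h2]
lemma three_mul_winding (r : ℕ) [NeZero r] (c : ZMod r → ZMod 3)
    (hc : ∀ x, c x ≠ c (x + 1)) :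
    3 * winding r c = ∑ x : ZMod r, (if c (x + 1) = c x + 1 then (1 : ℤ) else -1) := by
  classical
  set L : ZMod 3 → ℤ := fun z => if z = 2 then (0:ℤ) else if z = 0 then 1 else 2 with hL
  have key : ∀ u v : ZMod 3, u ≠ v →
      3 * ((if u = 1 ∧ v = 2 then (1:ℤ) else 0) - (if u = 2 ∧ v = 1 then 1 else 0))
        = (if v = u + 1 then (1:ℤ) else -1) + (L u - L v) := by decide
  have h1 : winding r c = ∑ x : ZMod r,
      ((if c x = 1 ∧ c (x+1) = 2 then (1:ℤ) else 0)
        - (if c x = 2 ∧ c (x+1) = 1 then 1 else 0)) := by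
    rw [winding]
    exact sum_range_zmod r (fun x => (if c x = 1 ∧ c (x+1) = 2 then (1:ℤ) else 0)
        - (if c x = 2 ∧ c (x+1) = 1 then 1 else 0))
  rw [h1, Finset.mul_sum]
  have h2 : ∀ x : ZMod r,
      3 * ((if c x = 1 ∧ c (x+1) = 2 then (1:ℤ) else 0)
        - (if c x = 2 ∧ c (x+1) = 1 then 1 else 0))
      = (if c (x+1) = c x + 1 then (1:ℤ) else -1) + (L (c x) - L (c (x+1))) :=
    fun x => key _ _ (hc x)
  rw [Finset.sum_congr rfl (fun x _ => h2 x), Finset.sum_add_distrib]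
  have h3 : ∑ x : ZMod r, (L (c x) - L (c (x+1))) = 0 := by
    rw [Finset.sum_sub_distrib]
    have : ∑ x : ZMod r, L (c (x + 1)) = ∑ x : ZMod r, L (c x) :=
      Fintype.sum_equiv (Equiv.addRight (1 : ZMod r)) _ _ (fun x => rfl)
    rw [this, sub_self]
  rw [h3, add_zero]

lemma winding_eq_of_ptwise (r : ℕ) [NeZero r] (c c' : ZMod r → ZMod 3)
    (hc : ∀ x, c x ≠ c (x + 1)) (hc' : ∀ x, c' x ≠ c' (x + 1))
    (hd : ∀ x, c' x ≠ c x) : winding r c' = winding r c := by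
  classical
  have key : ∀ a b a' b' : ZMod 3, a ≠ b → a' ≠ b' → a' ≠ a → b' ≠ b →
      (if b' = a' + 1 then (1:ℤ) else -1)
        = (if b = a + 1 then (1:ℤ) else -1)
          + (-2) * ((if b' - b = 2 then (1:ℤ) else 0) - (if a' - a = 2 then 1 else 0)) := by
    decide
  have h1 := three_mul_winding r c hc
  have h2 := three_mul_winding r c' hc'
  have h3 : ∑ x : ZMod r, (if c' (x+1) = c' x + 1 then (1:ℤ) else -1)
      = ∑ x : ZMod r, (if c (x+1) = c x + 1 then (1:ℤ) else -1) := by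
    have h4 : ∀ x : ZMod r, (if c' (x+1) = c' x + 1 then (1:ℤ) else -1)
        = (if c (x+1) = c x + 1 then (1:ℤ) else -1)
          + (-2) * ((if c' (x+1) - c (x+1) = 2 then (1:ℤ) else 0)
            - (if c' x - c x = 2 then 1 else 0)) :=
      fun x => key _ _ _ _ (hc x) (hc' x) (hd x) (hd (x+1))
    rw [Finset.sum_congr rfl (fun x _ => h4 x), Finset.sum_add_distrib]
    have h5 : ∑ x : ZMod r, (-2) * ((if c' (x+1) - c (x+1) = 2 then (1:ℤ) else 0)
        - (if c' x - c x = 2 then 1 else 0)) = 0 := by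
      rw [← Finset.mul_sum, Finset.sum_sub_distrib]
      have : ∑ x : ZMod r, (if c' (x+1) - c (x+1) = 2 then (1:ℤ) else 0)
          = ∑ x : ZMod r, (if c' x - c x = 2 then (1:ℤ) else 0) :=
        Fintype.sum_equiv (Equiv.addRight (1 : ZMod r)) _ _ (fun x => rfl)
      rw [this, sub_self, mul_zero]
    rw [h5, add_zero]
  omega

/-- Backward-greedy choice of "above flags". -/
def greedyG (k : ℕ) (F : ℕ → ZMod 3) : ℕ → ZMod 3 :=
  fun m => Nat.rec (if F (k-1) + 1 = F 1 then F (k-1) + 2 else F (k-1) + 1)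
    (fun m ih => if F (k-1-(m+1)) + 1 ≠ ih then F (k-1-(m+1)) + 1 else F (k-1-(m+1)) + 2) m

def greedy (k : ℕ) (F : ℕ → ZMod 3) (i : ℕ) : ZMod 3 := greedyG k F (k - 1 - i)

lemma greedyG_succ (k : ℕ) (F : ℕ → ZMod 3) (m : ℕ) :
    greedyG k F (m+1) = if F (k-1-(m+1)) + 1 ≠ greedyG k F m then F (k-1-(m+1)) + 1
      else F (k-1-(m+1)) + 2 := rfl

lemma zmod3_add_one_ne (x : ZMod 3) : x + 1 ≠ x + 2 := by
  revert x; decide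

lemma greedyG_ne_succ (k : ℕ) (F : ℕ → ZMod 3) (m : ℕ) :
    greedyG k F (m+1) ≠ greedyG k F m := by
  rw [greedyG_succ]
  split
  · assumption
  · next h =>
      push_neg at h
      rw [← h]
      exact (zmod3_add_one_ne _).symm

lemma greedyG_mem (k : ℕ) (F : ℕ → ZMod 3) (m : ℕ) :
    greedyG k F m = F (k-1-m) + 1 ∨ greedyG k F m = F (k-1-m) + 2 := by
  cases m with
  | zero =>
      have h0 : greedyG k F 0
          = (if F (k-1) + 1 = F 1 then F (k-1) + 2 else F (k-1) + 1) := rfl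
      rw [h0, Nat.sub_zero]
      split
      · exact Or.inr rfl
      · exact Or.inl rfl
  | succ m =>
      rw [greedyG_succ]
      split
      · exact Or.inl rfl
      · exact Or.inr rfl

lemma greedy_mem (k : ℕ) (F : ℕ → ZMod 3) (i : ℕ) (hi : i ≤ k - 1) :
    greedy k F i = F i + 1 ∨ greedy k F i = F i + 2 := by
  have h : k - 1 - (k - 1 - i) = i := by omega
  have := greedyG_mem k F (k - 1 - i)
  rw [h] at this
  exact this

lemma greedy_ne_succ (k : ℕ) (F : ℕ → ZMod 3) (i : ℕ) (hi : 3 ≤ i) (hi' : i < k - 1) :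
    greedy k F i ≠ greedy k F (i + 1) := by
  have h : k - 1 - i = (k - 1 - (i+1)) + 1 := by omega
  show greedyG k F (k-1-i) ≠ greedyG k F (k-1-(i+1))
  rw [h]
  exact greedyG_ne_succ k F _

lemma greedy_last_ne (k : ℕ) (F : ℕ → ZMod 3) :
    greedy k F (k - 1) ≠ F 1 := by
  show greedyG k F (k-1-(k-1)) ≠ F 1
  rw [Nat.sub_self]
  show (if F (k-1) + 1 = F 1 then F (k-1) + 2 else F (k-1) + 1) ≠ F 1
  split
  · next h => rw [← h]; exact (zmod3_add_one_ne _).symm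
  · assumption

lemma parity_cast_ne (x : ZMod 3) (aN bN : ℕ) (h : aN % 2 ≠ bN % 2) :
    x + ((aN % 2 : ℕ) : ZMod 3) ≠ x + ((bN % 2 : ℕ) : ZMod 3) := by
  have h01 : ∀ y : ZMod 3, y + ((0:ℕ) : ZMod 3) ≠ y + ((1:ℕ) : ZMod 3) := by decide
  rcases Nat.mod_two_eq_zero_or_one aN with ha | ha <;>
    rcases Nat.mod_two_eq_zero_or_one bN with hb | hb
  · omega
  · rw [ha, hb]; exact h01 x
  · rw [ha, hb]; exact (h01 x).symm
  · omega

lemma zmod3_ne_add_one (z : ZMod 3) : z ≠ z + 1 := by revert z; decide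
lemma zmod3_ne_add_two (z : ZMod 3) : z ≠ z + 2 := by revert z; decide

lemma reduce (r m : ℕ) (hr : 3 ≤ r) (hm : 2 ≤ m) (hpar : m % 2 = r % 2)
    (c : ZMod r → ZMod 3) (hc : ∀ x, c x ≠ c (x + 1))
    (hw : |winding r c| ≤ 1)
    (hs : HasSegmentation r c (m + 2)) :
    ∃ c' : ZMod r → ZMod 3, (∀ x, c' x ≠ c' (x + 1)) ∧ (∀ x, c' x ≠ c x) ∧
      HasSegmentation r c' m := by
  haveI : NeZero r := ⟨by omega⟩
  obtain ⟨k, t, len, hk0, hkle, hodd, hsum, hrec, hcol, hend⟩ := hs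
  haveI : NeZero k := ⟨by omega⟩
  have hlenpos : ∀ x : ZMod k, 0 < len x := fun x => (hodd x).1
  -- parity of k
  have hk_par : k % 2 = r % 2 := by
    have key : ∀ n : ℕ, (∑ i ∈ Finset.range n, len (i : ZMod k)) % 2 = n % 2 := by
      intro n; induction n with
      | zero => simp
      | succ n ih =>
          rw [Finset.sum_range_succ]
          obtain ⟨u, hu⟩ := (hodd ((n : ℕ) : ZMod k)).2
          omega
    have := key k; rw [hsum] at this; omega
  by_cases hksmall : k ≤ m
  · -- trivial case : shift all colors by one
    refine ⟨fun x => c x + 1, fun x h => hc x (by exact add_right_cancel h),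
      fun x => (zmod3_ne_add_one (c x)).symm,
      ⟨k, t, len, hk0, hksmall, hodd, hsum, hrec, fun i m' hm' => ?_, fun i => by
        simp only []
        rw [hend i]⟩⟩
    rcases hcol i m' hm' with h | h
    · exact Or.inl (by simp only []; rw [h])
    · exact Or.inr (by simp only []; rw [h])
  have hk : k = m + 2 := by omega
  have hk4 : 4 ≤ k := by omega
  -- flags and block structure
  set f : ZMod k → ZMod 3 := fun x => c (t x) with hf
  have hblock : ∀ (x : ZMod k) (m' : ℕ), m' < len x →
      c (t x + (m' : ZMod r)) = f x + ((m' % 2 : ℕ) : ZMod 3) := by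
    intro x m' hm'
    induction m' with
    | zero => simp [hf]
    | succ n ih =>
        have hn : n < len x := by omega
        have ih' := ih hn
        have hadj : c (t x + ((n : ℕ) : ZMod r)) ≠ c (t x + (((n+1 : ℕ)) : ZMod r)) := by
          have h := hc (t x + ((n : ℕ) : ZMod r))
          have harg : t x + ((n : ℕ) : ZMod r) + 1 = t x + (((n+1 : ℕ)) : ZMod r) := by
            push_cast; ring
          rwa [harg] at h
        have hmem := hcol x (n+1) hm'
        rcases Nat.even_or_odd n with he | ho
        · have h0 : n % 2 = 0 := Nat.even_iff.1 he
          have h1 : (n+1) % 2 = 1 := by omega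
          rw [h0] at ih'
          rw [h1]
          rcases hmem with h | h
          · exfalso; apply hadj; rw [ih', h]; simp [hf]
          · rw [h]; simp [hf]
        · have h0 : n % 2 = 1 := Nat.odd_iff.1 ho
          have h1 : (n+1) % 2 = 0 := by omega
          rw [h0] at ih'
          rw [h1]
          rcases hmem with h | h
          · rw [h]; simp [hf]
          · exfalso; apply hadj; rw [ih', h]; simp [hf]
  have hflag : ∀ x : ZMod k, f (x + 1) ≠ f x := by
    intro x
    have h1 : c (t x + ((len x - 1 : ℕ) : ZMod r)) = f x := hend x
    have h2 : t x + ((len x - 1 : ℕ) : ZMod r) + 1 = t (x + 1) := by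
      rw [hrec x]
      have h3 : ((len x - 1 : ℕ) : ZMod r) + 1 = ((len x : ℕ) : ZMod r) := by
        have h4 : len x - 1 + 1 = len x := Nat.succ_pred_eq_of_pos (hlenpos x)
        rw [show ((len x - 1 : ℕ) : ZMod r) + 1 = ((len x - 1 + 1 : ℕ) : ZMod r) by push_cast; ring, h4]
      rw [← h3]; ring
    have h5 := hc (t x + ((len x - 1 : ℕ) : ZMod r))
    rw [h1, h2] at h5
    exact fun hcontra => h5 (by rw [← hcontra])
  set dd : ZMod k → ZMod 3 := fun x => f (x + 1) - f x with hdd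
  have hdd12 : ∀ x, dd x = 1 ∨ dd x = 2 := by
    intro x
    have h0 : dd x ≠ 0 := sub_ne_zero.2 (hflag x)
    revert h0; generalize dd x = z; revert z; decide
  -- partial sums of lengths, rotated
  set T : ZMod k → ℕ → ℕ := fun j n => ∑ i ∈ Finset.range n, len (j + (i : ℕ)) with hT
  have hT0 : ∀ j, T j 0 = 0 := fun j => rfl
  have hTsucc : ∀ j n, T j (n+1) = T j n + len (j + (n : ℕ)) := fun j n =>
    Finset.sum_range_succ _ n
  have hTk : ∀ j, T j k = r := by
    intro j
    have e1 : T j k = ∑ x : ZMod k, len (j + x) :=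
      sum_range_zmod k (fun x => len (j + x))
    have e2 : ∑ x : ZMod k, len (j + x) = ∑ x : ZMod k, len x :=
      Fintype.sum_equiv (Equiv.addLeft j) _ _ (fun x => rfl)
    have e3 : ∑ x : ZMod k, len x = ∑ i ∈ Finset.range k, len ((i : ℕ) : ZMod k) :=
      (sum_range_zmod k len).symm
    rw [e1, e2, e3, hsum]
  have hTsm : ∀ j, StrictMono (T j) := fun j => strictMono_nat_of_lt_succ (fun n => by
    rw [hTsucc]; have := hlenpos (j + (n : ℕ)); omega)
  have hTge : ∀ j n, n ≤ T j n := by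
    intro j n
    induction n with
    | zero => omega
    | succ n ih => rw [hTsucc]; have := hlenpos (j + (n : ℕ)); omega
  have ht_off : ∀ (j : ZMod k) (n : ℕ), t (j + (n : ℕ)) = t j + ((T j n : ℕ) : ZMod r) := by
    intro j n
    induction n with
    | zero => simp [hT0]
    | succ n ih =>
        have e : j + ((n+1 : ℕ) : ZMod k) = (j + (n : ℕ)) + 1 := by push_cast; ring
        rw [e, hrec (j + (n : ℕ)), ih, hTsucc]
        push_cast; ring
  -- winding in terms of flag jumps
  have hsg : 3 * winding r c
      = ∑ i ∈ Finset.range k, (if dd ((i : ℕ) : ZMod k) = 1 then (1 : ℤ) else -1) := by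
    rw [three_mul_winding r c hc]
    have e1 : ∑ x : ZMod r, (if c (x+1) = c x + 1 then (1 : ℤ) else -1)
        = ∑ n ∈ Finset.range r,
            (if c ((t 0 + ((n : ℕ) : ZMod r)) + 1) = c (t 0 + ((n : ℕ) : ZMod r)) + 1
              then (1 : ℤ) else -1) := by
      have e1a : ∑ x : ZMod r, (if c ((t 0 + x) + 1) = c (t 0 + x) + 1 then (1 : ℤ) else -1)
          = ∑ x : ZMod r, (if c (x+1) = c x + 1 then (1 : ℤ) else -1) :=
        Fintype.sum_equiv (Equiv.addLeft (t 0)) _ _ (fun x => rfl)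
      rw [← e1a,
        sum_range_zmod r (fun x => if c ((t 0 + x) + 1) = c (t 0 + x) + 1 then (1 : ℤ) else -1)]
    rw [e1]
    have e2 : ∀ v : ℕ,
        ∑ n ∈ Finset.range (T 0 v),
            (if c ((t 0 + ((n : ℕ) : ZMod r)) + 1) = c (t 0 + ((n : ℕ) : ZMod r)) + 1
              then (1 : ℤ) else -1)
        = ∑ i ∈ Finset.range v, ∑ mm ∈ Finset.range (len ((0 : ZMod k) + (i : ℕ))),
            (if c ((t 0 + (((T 0 i + mm : ℕ)) : ZMod r)) + 1)
                = c (t 0 + (((T 0 i + mm : ℕ)) : ZMod r)) + 1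
              then (1 : ℤ) else -1) := by
      intro v
      induction v with
      | zero => simp [hT0]
      | succ v ih =>
          rw [hTsucc, sum_range_add'', ih, Finset.sum_range_succ]
    have e2' := e2 k
    rw [hTk 0] at e2'
    rw [e2']
    apply Finset.sum_congr rfl
    intro i hi
    have hik : i < k := Finset.mem_range.1 hi
    have hzi : (0 : ZMod k) + ((i : ℕ) : ZMod k) = ((i : ℕ) : ZMod k) := by ring
    set x : ZMod k := ((i : ℕ) : ZMod k) with hx
    rw [hzi]
    -- per-block sum
    have hpos : ∀ mm : ℕ, mm ≤ len x →
        t 0 + ((T 0 i + mm : ℕ) : ZMod r) = t x + ((mm : ℕ) : ZMod r) := by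
      intro mm _
      have := ht_off 0 i
      rw [hzi] at this
      rw [this]; push_cast; ring
    obtain ⟨u, hu⟩ := (hodd x).2
    have hlen1 : 0 < len x := hlenpos x
    rw [show len x = (len x - 1) + 1 by omega, Finset.sum_range_succ]
    have hinner : ∀ mm ∈ Finset.range (len x - 1),
        (if c (t 0 + ((T 0 i + mm : ℕ) : ZMod r) + 1)
            = c (t 0 + ((T 0 i + mm : ℕ) : ZMod r)) + 1 then (1:ℤ) else -1)
          = (if mm % 2 = 0 then (1:ℤ) else -1) := by
      intro mm hmm'
      have hmm : mm < len x - 1 := Finset.mem_range.1 hmm'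
      have hp1 : t 0 + ((T 0 i + mm : ℕ) : ZMod r) = t x + ((mm : ℕ) : ZMod r) :=
        hpos mm (by omega)
      have hp2 : t 0 + ((T 0 i + mm : ℕ) : ZMod r) + 1 = t x + (((mm+1 : ℕ)) : ZMod r) := by
        rw [hp1]; push_cast; ring
      rw [hp2, hp1, hblock x mm (by omega), hblock x (mm+1) (by omega)]
      rcases Nat.even_or_odd mm with he | ho
      · have h0 : mm % 2 = 0 := Nat.even_iff.1 he
        have h1 : (mm+1) % 2 = 1 := by omega
        rw [h0, h1]
        simp [Nat.cast_zero, Nat.cast_one, add_zero]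
      · have h0 : mm % 2 = 1 := Nat.odd_iff.1 ho
        have h1 : (mm+1) % 2 = 0 := by omega
        rw [h0, h1]
        simp only [Nat.cast_zero, Nat.cast_one, add_zero]
        have hA : ¬ (f x = f x + 1 + 1) := by
          have : ∀ w : ZMod 3, ¬ (w = w + 1 + 1) := by decide
          exact this (f x)
        simp [hA]
    rw [Finset.sum_congr rfl hinner, show len x - 1 = 2*u by omega, alt_sum u, zero_add]
    have hlast1 : t 0 + ((T 0 i + (2*u) : ℕ) : ZMod r) = t x + (((len x - 1 : ℕ)) : ZMod r) := by
      have := hpos (len x - 1) (by omega)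
      rw [show len x - 1 = 2*u by omega] at this
      rw [this, show len x - 1 = 2*u by omega]
    have hlast2 : t 0 + ((T 0 i + (2*u) : ℕ) : ZMod r) + 1 = t (x + 1) := by
      rw [hlast1, hrec x]
      have h3 : ((len x - 1 : ℕ) : ZMod r) + 1 = ((len x : ℕ) : ZMod r) := by
        rw [show ((len x - 1 : ℕ) : ZMod r) + 1 = ((len x - 1 + 1 : ℕ) : ZMod r) by push_cast; ring,
          show len x - 1 + 1 = len x by omega]
      rw [← h3]; ring
    have hcond : (c (t 0 + ((T 0 i + (2*u) : ℕ) : ZMod r) + 1)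
        = c (t 0 + ((T 0 i + (2*u) : ℕ) : ZMod r)) + 1) ↔ (dd x = 1) := by
      rw [hlast2, hlast1, hend x]
      show f (x+1) = f x + 1 ↔ dd x = 1
      rw [hdd]
      simp only []
      rw [sub_eq_iff_eq_add]
      exact ⟨fun h => by rw [h]; ring, fun h => by rw [h]; ring⟩
    rw [if_congr hcond rfl rfl]
  -- choice of a good rotation
  have hgoodj : ∃ j : ZMod k, greedy k (fun i : ℕ => f (j + (i : ℕ))) 3 ≠ f (j + ((1:ℕ) : ZMod k)) := by
    by_contra hcon
    push_neg at hcon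
    have hddeq : ∀ x : ZMod k, dd x = dd (x + 1) := by
      intro x
      have h1 := hcon (x - 1)
      have h2 := greedy_mem k (fun i : ℕ => f ((x-1) + (i : ℕ))) 3 (by omega)
      rw [h1] at h2
      have hx1 : (x - 1) + ((1:ℕ) : ZMod k) = x := by push_cast; ring
      have hx3 : (x - 1) + ((3:ℕ) : ZMod k) = x + 2 := by push_cast; ring
      simp only [hx1, hx3] at h2
      have hsum2 : dd x + dd (x+1) = f (x + 2) - f x := by
        rw [hdd]; simp only []; ring_nf
      have key : ∀ a b : ZMod 3, (a = 1 ∨ a = 2) → (b = 1 ∨ b = 2) →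
          (a + b = 1 ∨ a + b = 2) → a = b := by decide
      apply key _ _ (hdd12 x) (hdd12 (x+1))
      rw [hsum2]
      rcases h2 with h | h
      · refine Or.inr ?_
        rw [h]
        have : ∀ w : ZMod 3, w - (w + 1) = 2 := by decide
        exact this _
      · refine Or.inl ?_
        rw [h]
        have : ∀ w : ZMod 3, w - (w + 2) = 1 := by decide
        exact this _
    have hconst : ∀ x : ZMod k, dd x = dd 0 := by
      have hn : ∀ n : ℕ, dd ((n : ℕ) : ZMod k) = dd 0 := by
        intro n
        induction n with
        | zero => norm_num
        | succ n ih =>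
            rw [show ((n+1 : ℕ) : ZMod k) = ((n : ℕ) : ZMod k) + 1 by push_cast; ring,
              ← hddeq, ih]
      intro x
      have := hn x.val
      rwa [ZMod.natCast_rightInverse x] at this
    have hconstsum : ∑ i ∈ Finset.range k, (if dd ((i : ℕ) : ZMod k) = 1 then (1:ℤ) else -1)
        = ∑ i ∈ Finset.range k, (if dd 0 = 1 then (1:ℤ) else -1) :=
      Finset.sum_congr rfl (fun i _ => by rw [hconst])
    rw [hconstsum, Finset.sum_const, Finset.card_range] at hsg
    rcases abs_le.1 hw with ⟨hw1, hw2⟩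
    by_cases h01 : dd 0 = 1
    · rw [if_pos h01] at hsg
      simp only [nsmul_eq_mul, mul_one] at hsg
      omega
    · rw [if_neg h01] at hsg
      simp only [nsmul_eq_mul, mul_neg, mul_one] at hsg
      omega
  obtain ⟨j, hgood⟩ := hgoodj
  set F : ℕ → ZMod 3 := fun i => f (j + (i : ℕ)) with hF
  set g : ℕ → ZMod 3 := greedy k F with hgdef
  set β : ZMod 3 := F 1 with hβ
  set a : ZMod r := t j with ha
  have hg3 : g 3 ≠ β := hgood
  have hglast : g (k-1) ≠ β := greedy_last_ne k F
  have hgmem : ∀ i, 3 ≤ i → i ≤ k - 1 → g i = F i + 1 ∨ g i = F i + 2 :=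
    fun i _ hk1 => greedy_mem k F i hk1
  have hgadj : ∀ i, 3 ≤ i → i < k - 1 → g i ≠ g (i+1) :=
    fun i h3 hik => greedy_ne_succ k F i h3 hik
  have hFadj : ∀ i : ℕ, F (i+1) ≠ F i := by
    intro i
    have h := hflag (j + (i : ℕ))
    have e : (j + (i : ℕ)) + 1 = j + ((i+1 : ℕ) : ZMod k) := by push_cast; ring
    rw [e] at h; exact h
  have hFblock : ∀ (i mm : ℕ), mm < len (j + (i : ℕ)) →
      c (a + ((T j i + mm : ℕ) : ZMod r)) = F i + ((mm % 2 : ℕ) : ZMod 3) := by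
    intro i mm hmm
    have e : a + ((T j i + mm : ℕ) : ZMod r) = t (j + (i : ℕ)) + ((mm : ℕ) : ZMod r) := by
      rw [ht_off j i]; push_cast; ring
    rw [e]; exact hblock _ mm hmm
  set IDX : ℕ → ℕ := fun n => Nat.findGreatest (fun i => T j i ≤ n) n with hIDXdef
  set VAL : ℕ → ZMod 3 := fun n => if n < T j 3 then β + ((n % 2 : ℕ) : ZMod 3)
      else g (IDX n) + (((n - T j (IDX n)) % 2 : ℕ) : ZMod 3) with hVALdef
  set c' : ZMod r → ZMod 3 := fun x => VAL ((x - a).val) with hc'def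
  have hIDXeq : ∀ i mm : ℕ, mm < len (j + (i : ℕ)) → IDX (T j i + mm) = i := by
    intro i mm hmm
    have hb : i ≤ T j i + mm := le_trans (hTge j i) (by omega)
    show Nat.findGreatest (fun i' => T j i' ≤ T j i + mm) (T j i + mm) = i
    apply Nat.findGreatest_eq_iff.2
    refine ⟨hb, fun _ => by omega, fun n hn hnb hP => ?_⟩
    have hmono : T j (i+1) ≤ T j n := (hTsm j).monotone hn
    rw [hTsucc] at hmono
    omega
  have hDECOMP : ∀ n : ℕ, n < r →
      ∃ i, i < k ∧ ∃ mm, mm < len (j + (i : ℕ)) ∧ n = T j i + mm := by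
    intro n hn
    have hPi : T j (IDX n) ≤ n :=
      Nat.findGreatest_spec (m := 0) (P := fun i => T j i ≤ n) (Nat.zero_le n)
        (by show T j 0 ≤ n; rw [hT0]; omega)
    have hik : IDX n < k := by
      by_contra hcontra
      push_neg at hcontra
      have hmono := (hTsm j).monotone hcontra
      rw [hTk j] at hmono
      omega
    refine ⟨IDX n, hik, n - T j (IDX n), ?_, by omega⟩
    by_contra hcontra
    push_neg at hcontra
    have hP1 : T j (IDX n + 1) ≤ n := by rw [hTsucc]; omega
    have hble : IDX n + 1 ≤ n := le_trans (hTge j _) hP1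
    have hgt := Nat.le_findGreatest (P := fun i => T j i ≤ n) hble hP1
    have hgt2 : Nat.findGreatest (fun i => T j i ≤ n) n = IDX n := rfl
    omega
  have hEVAL3 : ∀ i mm : ℕ, 3 ≤ i → mm < len (j + (i : ℕ)) →
      VAL (T j i + mm) = g i + ((mm % 2 : ℕ) : ZMod 3) := by
    intro i mm h3 hmm
    have hge : ¬ (T j i + mm < T j 3) := by
      have := (hTsm j).monotone h3
      omega
    show (if T j i + mm < T j 3 then β + (((T j i + mm) % 2 : ℕ) : ZMod 3)
      else g (IDX (T j i + mm)) + (((T j i + mm - T j (IDX (T j i + mm))) % 2 : ℕ) : ZMod 3))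
        = g i + ((mm % 2 : ℕ) : ZMod 3)
    rw [if_neg hge, hIDXeq i mm hmm, show T j i + mm - T j i = mm by omega]
  have hEVALm : ∀ n : ℕ, n < T j 3 → VAL n = β + ((n % 2 : ℕ) : ZMod 3) := by
    intro n hn
    show (if n < T j 3 then β + ((n % 2 : ℕ) : ZMod 3) else _) = _
    rw [if_pos hn]
  have hc'eval : ∀ n : ℕ, n < r → c' (a + ((n : ℕ) : ZMod r)) = VAL n := by
    intro n hn
    show VAL ((a + ((n : ℕ) : ZMod r) - a).val) = VAL n
    rw [add_sub_cancel_left, ZMod.val_cast_of_lt hn]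
  have e1T : T j 1 = T j 0 + len (j + ((0:ℕ) : ZMod k)) := hTsucc j 0
  have e2T : T j 2 = T j 1 + len (j + ((1:ℕ) : ZMod k)) := hTsucc j 1
  have e3T : T j 3 = T j 2 + len (j + ((2:ℕ) : ZMod k)) := hTsucc j 2
  have o0T := Nat.odd_iff.1 (hodd (j + ((0:ℕ) : ZMod k))).2
  have o1T := Nat.odd_iff.1 (hodd (j + ((1:ℕ) : ZMod k))).2
  have o2T := Nat.odd_iff.1 (hodd (j + ((2:ℕ) : ZMod k))).2
  have zT := hT0 j
  have hT3odd : T j 3 % 2 = 1 := by omega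
  have hT1odd : T j 1 % 2 = 1 := by omega
  have hT2even : T j 2 % 2 = 0 := by omega
  have hT3pos : 0 < T j 3 := by omega
  have hT3ler : T j 3 ≤ r := by
    have := (hTsm j).monotone (show 3 ≤ k by omega)
    rw [hTk j] at this
    exact this
  -- pointwise difference
  have hptne : ∀ x : ZMod r, c' x ≠ c x := by
    intro x
    have hnr : (x - a).val < r := ZMod.val_lt _
    obtain ⟨i, hik, mm, hmm, hnd⟩ := hDECOMP ((x - a).val) hnr
    have hxval : x = a + (((x - a).val : ℕ) : ZMod r) := by
      rw [ZMod.natCast_rightInverse (x - a)]; ring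
    have hcx : c x = F i + ((mm % 2 : ℕ) : ZMod 3) := by
      conv_lhs => rw [hxval, hnd]
      exact hFblock i mm hmm
    have hc'x : c' x = VAL ((x - a).val) := rfl
    rw [hc'x, hcx, hnd]
    by_cases h3 : 3 ≤ i
    · rw [hEVAL3 i mm h3 hmm]
      have hgFi := hgmem i h3 (by omega)
      intro hcontra
      have hcan := add_right_cancel hcontra
      rcases hgFi with h | h
      · rw [hcan] at h; exact zmod3_ne_add_one (F i) h
      · rw [hcan] at h; exact zmod3_ne_add_two (F i) h
    · push_neg at h3
      have hlt : T j i + mm < T j 3 := by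
        have h1 : T j i + mm < T j (i+1) := by rw [hTsucc]; omega
        have h2 : T j (i+1) ≤ T j 3 := (hTsm j).monotone (by omega)
        omega
      rw [hEVALm _ hlt]
      interval_cases i
      · rw [hT0 j]
        simp only [Nat.zero_add]
        intro hcontra
        have hcan := add_right_cancel hcontra
        exact hFadj 0 (hβ ▸ hcan)
      · have hpar : (T j 1 + mm) % 2 ≠ mm % 2 := by omega
        have hne := parity_cast_ne β (T j 1 + mm) mm hpar
        rw [hβ] at hne ⊢
        exact hne
      · have hpar : (T j 2 + mm) % 2 = mm % 2 := by omega
        rw [hpar]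
        intro hcontra
        have hcan := add_right_cancel hcontra
        exact hFadj 1 (by rw [← hβ, ← hcan])
  -- properness
  have hprop : ∀ x : ZMod r, c' x ≠ c' (x + 1) := by
    intro x
    have hnr : (x - a).val < r := ZMod.val_lt _
    have hxval : x = a + (((x - a).val : ℕ) : ZMod r) := by
      rw [ZMod.natCast_rightInverse (x - a)]; ring
    obtain ⟨i, hik, mm, hmm, hnd⟩ := hDECOMP ((x - a).val) hnr
    have hc'x : c' x = VAL ((x - a).val) := rfl
    have hx1 : x + 1 = a + ((((x - a).val + 1 : ℕ)) : ZMod r) := by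
      conv_lhs => rw [hxval]
      push_cast; ring
    by_cases hwrap : (x - a).val + 1 = r
    · have hzz : ((((x - a).val + 1 : ℕ)) : ZMod r) = 0 := by
        rw [hwrap]; exact ZMod.natCast_self r
      have hc'x1 : c' (x + 1) = VAL 0 := by
        rw [hx1, hzz]
        show VAL ((a + 0 - a).val) = VAL 0
        norm_num
      have hik1 : i + 1 = k := by
        by_contra hcontra
        have hik2 : i + 1 < k := by omega
        have hmono : T j (i+1) < T j k := hTsm j hik2
        rw [hTk j, hTsucc] at hmono
        omega
      have hmmval : mm = len (j + (i : ℕ)) - 1 := by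
        have h5 : T j (i+1) = T j i + len (j + (i : ℕ)) := hTsucc j i
        have h6 : T j (i+1) = r := by rw [hik1]; exact hTk j
        omega
      have hi3 : 3 ≤ i := by omega
      rw [hc'x, hc'x1, hnd, hEVAL3 i mm hi3 hmm, hEVALm 0 hT3pos]
      have hmm2 : mm % 2 = 0 := by
        have := Nat.odd_iff.1 (hodd (j + (i : ℕ))).2
        omega
      rw [hmm2]
      intro hcontra
      have hcan := add_right_cancel hcontra
      exact hglast (by rw [show k - 1 = i by omega, hcan])
    · have hn1r : (x - a).val + 1 < r := by omega
      have hc'x1 : c' (x + 1) = VAL ((x - a).val + 1) := by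
        rw [hx1]; exact hc'eval _ hn1r
      rw [hc'x, hc'x1, hnd]
      by_cases hm1 : mm + 1 < len (j + (i : ℕ))
      · rw [show T j i + mm + 1 = T j i + (mm + 1) by omega]
        by_cases h3 : 3 ≤ i
        · rw [hEVAL3 i mm h3 hmm, hEVAL3 i (mm+1) h3 hm1]
          exact parity_cast_ne _ mm (mm+1) (by omega)
        · push_neg at h3
          have hlt1 : T j i + (mm + 1) < T j 3 := by
            have h1 : T j i + (mm+1) < T j (i+1) := by rw [hTsucc]; omega
            have h2 : T j (i+1) ≤ T j 3 := (hTsm j).monotone (by omega)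
            omega
          rw [hEVALm _ (by omega), hEVALm _ hlt1]
          exact parity_cast_ne _ _ _ (by omega)
      · have hTi1 : T j i + mm + 1 = T j (i+1) := by rw [hTsucc]; omega
        have hik2 : i + 1 < k := by
          by_contra hcontra
          have hieq : i + 1 = k := by omega
          rw [hieq, hTk j] at hTi1
          omega
        rw [hTi1]
        by_cases h3 : 3 ≤ i
        · have hmm2 : mm % 2 = 0 := by
            have := Nat.odd_iff.1 (hodd (j + (i : ℕ))).2
            omega
          have e0 : T j (i+1) = T j (i+1) + 0 := by omega
          rw [e0, hEVAL3 i mm h3 hmm, hEVAL3 (i+1) 0 (by omega) (hlenpos _), hmm2]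
          intro hcontra
          have hcan := add_right_cancel hcontra
          exact hgadj i h3 (by omega) hcan
        · push_neg at h3
          by_cases hi2 : i = 2
          · -- boundary between merged region and block 3
            subst hi2
            have h32 : T j 2 + mm + 1 = T j 3 := hTi1
            have hlt : T j 2 + mm < T j 3 := by omega
            have hpar0 : (T j 2 + mm) % 2 = 0 := by omega
            have hval3 : VAL (T j 2 + mm + 1) = g 3 + (((0:ℕ) % 2 : ℕ) : ZMod 3) := by
              rw [h32, show T j 3 = T j 3 + 0 by omega]
              exact hEVAL3 3 0 (by omega) (hlenpos _)
            rw [show T j 2 + mm + 1 = T j (2+1) from hTi1] at hval3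
            rw [hEVALm _ hlt, hval3, hpar0]
            intro hcontra
            norm_num at hcontra
            exact hg3 hcontra.symm
          · -- inside merged region
            have hi1 : i + 1 ≤ 2 := by omega
            have hlt0 : T j i + mm < T j 3 := by
              have h1 : T j i + mm < T j (i+1) := by rw [hTsucc]; omega
              have h2 : T j (i+1) ≤ T j 3 := (hTsm j).monotone (by omega)
              omega
            have hlt1 : T j (i+1) < T j 3 := hTsm j (by omega)
            rw [hEVALm _ hlt0, hEVALm _ hlt1]
            rw [← hTi1]
            exact parity_cast_ne _ _ _ (by omega)
  refine ⟨c', hprop, hptne, ?_⟩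
  haveI : NeZero m := ⟨by omega⟩
  haveI : Fact (1 < m) := ⟨by omega⟩
  set t' : ZMod m → ZMod r :=
    fun i => a + ((T j (if i.val = 0 then 0 else i.val + 2) : ℕ) : ZMod r) with ht'
  set len' : ZMod m → ℕ :=
    fun i => if i.val = 0 then T j 3 else len (j + ((i.val + 2 : ℕ) : ZMod k)) with hlen'
  have hlen'eval : ∀ i : ZMod m,
      len' i = if i.val = 0 then T j 3 else len (j + ((i.val + 2 : ℕ) : ZMod k)) := fun i => rfl
  have ht'eval : ∀ i : ZMod m,
      t' i = a + ((T j (if i.val = 0 then 0 else i.val + 2) : ℕ) : ZMod r) := fun i => rfl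
  have hvalm : ∀ i : ZMod m, i.val < m := fun i => ZMod.val_lt i
  have hqk : ∀ i : ZMod m, i.val + 2 < k := by intro i; have := hvalm i; omega
  refine ⟨m, t', len', by omega, le_refl m, ?_, ?_, ?_, ?_, ?_⟩
  · -- positivity and oddness
    intro i
    rw [hlen'eval]
    by_cases h0 : i.val = 0
    · rw [if_pos h0]
      exact ⟨hT3pos, Nat.odd_iff.2 hT3odd⟩
    · rw [if_neg h0]
      exact ⟨hlenpos _, (hodd _).2⟩
  · -- lengths sum to r
    have hsummand : ∀ i ∈ Finset.range m, len' ((i : ℕ) : ZMod m)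
        = (if i = 0 then T j 3 else len (j + ((i + 2 : ℕ) : ZMod k))) := by
      intro i hi
      rw [hlen'eval, ZMod.val_cast_of_lt (Finset.mem_range.1 hi)]
    rw [Finset.sum_congr rfl hsummand]
    have hm1 : m = (m - 1) + 1 := by omega
    rw [hm1, Finset.sum_range_succ']
    have hterm : ∀ i ∈ Finset.range (m - 1),
        (if i + 1 = 0 then T j 3 else len (j + ((i + 1 + 2 : ℕ) : ZMod k)))
          = len (j + ((3 + i : ℕ) : ZMod k)) := by
      intro i _
      rw [if_neg (by omega), show i + 1 + 2 = 3 + i by omega]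
    rw [Finset.sum_congr rfl hterm, if_pos rfl]
    have hsplit : T j k = T j 3 + ∑ i ∈ Finset.range (m - 1), len (j + ((3 + i : ℕ) : ZMod k)) := by
      have e : T j k = ∑ i ∈ Finset.range (3 + (m-1)), len (j + (i : ℕ)) := by
        rw [show 3 + (m - 1) = k by omega]
      rw [e, sum_range_add'']
    rw [hTk j] at hsplit
    omega
  · -- recurrence
    intro i
    have hival := hvalm i
    have hval1 : (i + 1).val = (i.val + 1) % m := by rw [ZMod.val_add, ZMod.val_one]
    rw [ht'eval, ht'eval, hlen'eval]
    by_cases h0 : i.val = 0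
    · have hv1 : (i + 1).val = 1 := by rw [hval1, h0, Nat.mod_eq_of_lt (by omega)]
      rw [hv1, h0, if_neg (by omega), if_pos rfl, if_pos rfl, hT0, show (1:ℕ) + 2 = 3 by omega]
      push_cast
      ring
    · by_cases hlast : i.val = m - 1
      · have hv1 : (i + 1).val = 0 := by
          rw [hval1, hlast, show m - 1 + 1 = m by omega, Nat.mod_self]
        rw [hv1, if_pos rfl, if_neg h0, if_neg h0, hT0]
        have e : T j (i.val + 2) + len (j + ((i.val + 2 : ℕ) : ZMod k)) = T j k := by
          have h5 := hTsucc j (i.val + 2)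
          rw [← h5, show (i.val + 2) + 1 = k by omega]
        have e2 : ((T j (i.val+2) : ℕ) : ZMod r)
            + ((len (j + ((i.val + 2 : ℕ) : ZMod k)) : ℕ) : ZMod r) = 0 := by
          have e3 : ((T j (i.val+2) + len (j + ((i.val + 2 : ℕ) : ZMod k)) : ℕ) : ZMod r) = 0 := by
            rw [e, hTk j]; exact ZMod.natCast_self r
          rw [← e3]; push_cast; ring
        rw [add_assoc, e2]
        norm_num
      · have hv1 : (i + 1).val = i.val + 1 := by rw [hval1, Nat.mod_eq_of_lt (by omega)]
        rw [hv1, if_neg (by omega), if_neg h0, if_neg h0]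
        have e : T j (i.val + 1 + 2) = T j (i.val + 2) + len (j + ((i.val + 2 : ℕ) : ZMod k)) := by
          rw [show i.val + 1 + 2 = (i.val + 2) + 1 by omega, hTsucc]
        rw [e]
        push_cast
        ring
  · -- colors within segments
    intro i m' hm'
    rw [hlen'eval] at hm'
    by_cases h0 : i.val = 0
    · rw [if_pos h0] at hm'
      have hti : t' i = a + ((0 : ℕ) : ZMod r) := by
        rw [ht'eval, if_pos h0, hT0]
      have hv0 : c' (t' i) = VAL 0 := by
        rw [hti]; exact hc'eval 0 (by omega)
      have hvm : c' (t' i + (m' : ZMod r)) = VAL m' := by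
        rw [hti, show a + ((0:ℕ) : ZMod r) + ((m' : ℕ) : ZMod r) = a + ((m' : ℕ) : ZMod r) by
          push_cast; ring]
        exact hc'eval m' (by omega)
      rw [hvm, hv0, hEVALm m' hm', hEVALm 0 hT3pos]
      rcases Nat.mod_two_eq_zero_or_one m' with hp | hp
      · left; rw [hp]
      · right; rw [hp]; norm_num
    · rw [if_neg h0] at hm'
      have hq3 : 3 ≤ i.val + 2 := by omega
      have hbound : T j (i.val + 2) + m' < r := by
        have h1 : T j ((i.val + 2) + 1) = T j (i.val + 2) + len (j + ((i.val + 2 : ℕ) : ZMod k)) :=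
          hTsucc j (i.val + 2)
        have h2 : T j ((i.val + 2) + 1) ≤ T j k :=
          (hTsm j).monotone (by have := hvalm i; omega)
        rw [hTk j] at h2
        omega
      have hti : t' i = a + ((T j (i.val + 2) : ℕ) : ZMod r) := by
        rw [ht'eval, if_neg h0]
      have hvm : c' (t' i + (m' : ZMod r)) = VAL (T j (i.val + 2) + m') := by
        rw [hti, show a + ((T j (i.val+2) : ℕ) : ZMod r) + ((m' : ℕ) : ZMod r)
          = a + ((T j (i.val+2) + m' : ℕ) : ZMod r) by push_cast; ring]
        exact hc'eval _ hbound
      have hv0 : c' (t' i) = VAL (T j (i.val + 2) + 0) := by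
        rw [hti, show T j (i.val + 2) + 0 = T j (i.val + 2) by omega]
        exact hc'eval _ (by omega)
      rw [hvm, hv0, hEVAL3 _ m' hq3 hm', hEVAL3 _ 0 hq3 (hlenpos _)]
      rcases Nat.mod_two_eq_zero_or_one m' with hp | hp
      · left; rw [hp]
      · right; rw [hp]; norm_num
  · -- ends of segments
    intro i
    rw [hlen'eval]
    by_cases h0 : i.val = 0
    · rw [if_pos h0]
      have hti : t' i = a + ((0 : ℕ) : ZMod r) := by
        rw [ht'eval, if_pos h0, hT0]
      have hv0 : c' (t' i) = VAL 0 := by rw [hti]; exact hc'eval 0 (by omega)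
      have hvm : c' (t' i + ((T j 3 - 1 : ℕ) : ZMod r)) = VAL (T j 3 - 1) := by
        rw [hti, show a + ((0:ℕ) : ZMod r) + ((T j 3 - 1 : ℕ) : ZMod r)
          = a + ((T j 3 - 1 : ℕ) : ZMod r) by push_cast; ring]
        exact hc'eval _ (by omega)
      rw [hvm, hv0, hEVALm _ (by omega), hEVALm 0 hT3pos,
        show (T j 3 - 1) % 2 = 0 % 2 by omega]
    · rw [if_neg h0]
      have hq3 : 3 ≤ i.val + 2 := by omega
      set q := i.val + 2 with hqdef
      have hlq : len (j + ((q : ℕ) : ZMod k)) - 1 < len (j + ((q : ℕ) : ZMod k)) := by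
        have := hlenpos (j + ((q : ℕ) : ZMod k)); omega
      have hbound : T j q + (len (j + ((q : ℕ) : ZMod k)) - 1) < r := by
        have h1 : T j (q + 1) = T j q + len (j + ((q : ℕ) : ZMod k)) := hTsucc j q
        have h1' := hlenpos (j + ((q : ℕ) : ZMod k))
        have h2 : T j (q + 1) ≤ T j k := (hTsm j).monotone (by have := hvalm i; omega)
        rw [hTk j] at h2
        omega
      have hti : t' i = a + ((T j q : ℕ) : ZMod r) := by
        rw [ht'eval, if_neg h0]
      have hvm : c' (t' i + ((len (j + ((q : ℕ) : ZMod k)) - 1 : ℕ) : ZMod r))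
          = VAL (T j q + (len (j + ((q : ℕ) : ZMod k)) - 1)) := by
        rw [hti, show a + ((T j q : ℕ) : ZMod r) + ((len (j + ((q : ℕ) : ZMod k)) - 1 : ℕ) : ZMod r)
          = a + ((T j q + (len (j + ((q : ℕ) : ZMod k)) - 1) : ℕ) : ZMod r) by push_cast; ring]
        exact hc'eval _ hbound
      have hv0 : c' (t' i) = VAL (T j q + 0) := by
        rw [hti, show T j q + 0 = T j q by omega]
        exact hc'eval _ (by omega)
      rw [hvm, hv0, hEVAL3 q _ hq3 hlq, hEVAL3 q 0 hq3 (hlenpos _),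
        show (len (j + ((q : ℕ) : ZMod k)) - 1) % 2 = 0 % 2 by
          have := Nat.odd_iff.1 (hodd (j + ((q : ℕ) : ZMod k))).2
          have := hlenpos (j + ((q : ℕ) : ZMod k))
          omega]

/-- If a proper 3-coloring `φ` of the hoop `D₁` of the `r × s` cylindrical grid
with `|w_φ(D₁)| ≤ 1` extends to a proper 3-coloring `ψ` of the subgraph `G_p`
induced by the first `p` hoops (`1 ≤ p ≤ s − 1`, `2p ≤ r − 2`) such that `D_p`
has a segmentation with respect to `ψ` into at most `r − 2p + 2` segments, then
`φ` extends to a proper 3-coloring `ψ'` of `G_{p+1}` such that `D_{p+1}` has a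
segmentation with respect to `ψ'` into at most `r − 2p` segments. -/
theorem stmt_8 (r s p : ℕ) (hr : 3 ≤ r) (hs : 1 ≤ s)
    (hp1 : 1 ≤ p) (hp2 : p + 1 ≤ s) (hp3 : 2 * p + 2 ≤ r)
    (φ : ZMod r → ZMod 3) (hφ : ∀ i : ZMod r, φ i ≠ φ (i + 1))
    (hw : |winding r φ| ≤ 1)
    (ψ : ZMod r × Fin s → ZMod 3)
    (hψ : ∀ u v : ZMod r × Fin s, (cylGrid r s).Adj u v →
        u.2.val < p → v.2.val < p → ψ u ≠ ψ v)
    (hext : ∀ i : ZMod r, ψ (i, ⟨0, by omega⟩) = φ i)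
    (hseg : HasSegmentation r (fun i => ψ (i, ⟨p - 1, by omega⟩)) (r - 2 * p + 2)) :
    ∃ ψ' : ZMod r × Fin s → ZMod 3,
      (∀ u v : ZMod r × Fin s, (cylGrid r s).Adj u v →
        u.2.val < p + 1 → v.2.val < p + 1 → ψ' u ≠ ψ' v) ∧
      (∀ i : ZMod r, ψ' (i, ⟨0, by omega⟩) = φ i) ∧
      HasSegmentation r (fun i => ψ' (i, ⟨p, by omega⟩)) (r - 2 * p) := by
  haveI : NeZero r := ⟨by omega⟩
  haveI : Fact (1 < r) := ⟨by omega⟩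
  have hone : (1 : ZMod r) ≠ 0 := one_ne_zero
  -- horizontal adjacency in the grid
  have hadj_h : ∀ (i : ZMod r) (q : ℕ) (hq : q < s),
      (cylGrid r s).Adj (i, ⟨q, hq⟩) ((i + 1 : ZMod r), ⟨q, hq⟩) := by
    intro i q hq
    refine ⟨?_, Or.inl ⟨rfl, Or.inl rfl⟩⟩
    intro h
    have h1 : i = i + 1 := congrArg Prod.fst h
    exact hone (by
      have := (left_eq_add (a := i) (b := (1 : ZMod r))).1 h1
      exact this)
  -- vertical adjacency in the grid
  have hadj_v : ∀ (i : ZMod r) (q : ℕ) (hq1 : q < s) (hq : q + 1 < s),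
      (cylGrid r s).Adj (i, ⟨q, hq1⟩) (i, ⟨q + 1, hq⟩) := by
    intro i q hq1 hq
    refine ⟨?_, Or.inr ⟨rfl, Or.inl rfl⟩⟩
    intro h
    have h2 : (⟨q, hq1⟩ : Fin s) = ⟨q+1, hq⟩ := congrArg Prod.snd h
    have h3 := congrArg Fin.val h2
    simp at h3
  -- properness of each hoop
  have hoopP : ∀ (q : ℕ) (hq : q < p) (i : ZMod r),
      ψ (i, ⟨q, by omega⟩) ≠ ψ (i + 1, ⟨q, by omega⟩) := by
    intro q hq i
    exact hψ _ _ (hadj_h i q (by omega)) (by simpa using hq) (by simpa using hq)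
  -- vertical difference
  have hvert : ∀ (q : ℕ) (hq : q + 1 < p) (i : ZMod r),
      ψ (i, ⟨q + 1, by omega⟩) ≠ ψ (i, ⟨q, by omega⟩) := by
    intro q hq i
    exact fun hcontra =>
      hψ _ _ (hadj_v i q (by omega) (by omega)) (by simpa using (by omega : q < p))
        (by simpa using hq) hcontra.symm
  -- winding transport
  have htrans : ∀ (q : ℕ) (hq : q < p),
      winding r (fun i => ψ (i, ⟨q, by omega⟩)) = winding r φ := by
    intro q
    induction q with
    | zero =>
        intro _
        have he : (fun i : ZMod r => ψ (i, ⟨0, by omega⟩)) = φ := funext hext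
        rw [he]
    | succ q ih =>
        intro hq
        have h1 := ih (by omega)
        rw [← h1]
        exact winding_eq_of_ptwise r (fun i => ψ (i, ⟨q, by omega⟩))
          (fun i => ψ (i, ⟨q + 1, by omega⟩))
          (fun i => hoopP q (by omega) i)
          (fun i => hoopP (q+1) hq i)
          (fun i => hvert q hq i)
  set c : ZMod r → ZMod 3 := fun i => ψ (i, ⟨p - 1, by omega⟩) with hcdef
  have hcprop : ∀ x, c x ≠ c (x + 1) := fun x => hoopP (p-1) (by omega) x
  have hwc : |winding r c| ≤ 1 := by
    have := htrans (p-1) (by omega)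
    rw [hcdef]
    rw [this]
    exact hw
  obtain ⟨c', hc'p, hc'ne, hc'seg⟩ :=
    reduce r (r - 2*p) hr (by omega) (by omega) c hcprop hwc
      (by
        have he : r - 2*p + 2 = (r - 2*p) + 2 := by omega
        rw [← he]
        exact hseg)
  refine ⟨fun u => if u.2.val < p then ψ u else c' u.1, ?_, ?_, ?_⟩
  · -- properness on the first p+1 hoops
    intro u v hadj hu hv
    obtain ⟨hne, hor⟩ := hadj
    by_cases hup : u.2.val < p <;> by_cases hvp : v.2.val < p
    · simp only [if_pos hup, if_pos hvp]
      exact hψ u v ⟨hne, hor⟩ hup hvp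
    · -- u < p, v at level p
      have hvval : v.2.val = p := by omega
      simp only [if_pos hup, if_neg (by omega : ¬ v.2.val < p)]
      rcases hor with ⟨h1, _⟩ | ⟨h1, h2⟩
      · exfalso; rw [h1] at hup; omega
      · have huval : u.2.val = p - 1 := by omega
        have hu2 : u.2 = (⟨p - 1, by omega⟩ : Fin s) := Fin.ext (by simpa using huval)
        have hueq : u = (v.1, (⟨p - 1, by omega⟩ : Fin s)) := Prod.ext h1 hu2
        rw [hueq]
        exact (hc'ne v.1).symm
    · -- v < p, u at level p
      have huval : u.2.val = p := by omega
      simp only [if_neg (by omega : ¬ u.2.val < p), if_pos hvp]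
      rcases hor with ⟨h1, _⟩ | ⟨h1, h2⟩
      · exfalso; rw [← h1] at hvp; omega
      · have hvval : v.2.val = p - 1 := by omega
        have hv2 : v.2 = (⟨p - 1, by omega⟩ : Fin s) := Fin.ext (by simpa using hvval)
        have hveq : v = (u.1, (⟨p - 1, by omega⟩ : Fin s)) := Prod.ext h1.symm hv2
        rw [hveq]
        exact hc'ne u.1
    · -- both at level p : horizontal
      simp only [if_neg (by omega : ¬ u.2.val < p), if_neg (by omega : ¬ v.2.val < p)]
      rcases hor with ⟨h1, h2⟩ | ⟨h1, h2⟩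
      · rcases h2 with h2 | h2
        · rw [h2]; exact hc'p u.1
        · rw [h2]; exact (hc'p v.1).symm
      · exfalso; omega
  · intro i
    simp only [if_pos (by simpa using (by omega : (0:ℕ) < p))]
    exact hext i
  · have he : (fun i => if ((⟨p, by omega⟩ : Fin s)).val < p then ψ (i, ⟨p, by omega⟩) else c' i)
        = c' := by
      funext i
      rw [if_neg (by simp)]
    rw [he]
    exact hc'seg
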